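/- arXiv:2105.00276 — 5 statements merged into one kernel-verified Lean document; each statement's English description precedes it below -/
import Mathlib

section
/- Sokhotski–Plemelj formula: For every Schwartz function φ : ℝ → ℂ and each choice of sign σ ∈ {+1, −1}, the limit lim_{ε→0⁺} ∫_ℝ φ(x)/(ε + σ·i·x) dx exists and equals π·φ(0) − σ·i·lim_{ε→0⁺} ∫_{|x|>ε} φ(x)/x dx (in particular the principal-value limit on the right exists). -/
open MeasureTheory Filter Real Topology Bornology ProbabilityTheory

/-!
Writing `1 / (ε + iσx) = (ε - iσx) / (ε² + x²)` splits the integral into a Poisson part and a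
conjugate Poisson part. The Poisson kernel `ε / (π (ε² + x²))` is the Cauchy density of scale `ε`,
a family of peak functions at `0`, so the first part tends to `π φ(0)`. In the conjugate part and
in the principal value the kernel is odd, so only the symmetric difference quotient
`(φ(x) - φ(-x)) / 2x` contributes; it is integrable since `φ` is Lipschitz and integrable, and
dominated convergence gives the same limit `∫ (φ(x) - φ(-x)) / 2x dx` for both.
-/

variable {E : Type*} [NormedAddCommGroup E] [NormedSpace ℝ E]

noncomputable def symmDiffQuot (f : ℝ → E) (x : ℝ) : E := (2 * x)⁻¹ • (f x - f (-x))

lemma norm_symmDiffQuot_le {f : ℝ → E} {K : NNReal} (hf : LipschitzWith K f) (x : ℝ) :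
    ‖symmDiffQuot f x‖ ≤ K := by
  rcases eq_or_ne x 0 with rfl | hx
  · simp [symmDiffQuot]
  have hx' : 0 < |2 * x| := by positivity
  calc ‖symmDiffQuot f x‖ = ‖f x - f (-x)‖ / |2 * x| := by
        rw [symmDiffQuot, norm_smul, norm_inv, Real.norm_eq_abs, inv_mul_eq_div]
    _ ≤ K * |2 * x| / |2 * x| := by
        gcongr
        simpa [← dist_eq_norm, Real.dist_eq, ← two_mul] using hf.dist_le_mul x (-x)
    _ = K := mul_div_cancel_right₀ _ hx'.ne'

lemma norm_symmDiffQuot_le_of_one_le_abs (f : ℝ → E) {x : ℝ} (hx : 1 ≤ |x|) :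
    ‖symmDiffQuot f x‖ ≤ ‖f x - f (-x)‖ := by
  rw [symmDiffQuot, norm_smul, norm_inv, Real.norm_eq_abs, abs_mul, abs_two]
  exact inv_mul_le_of_le_mul₀ (by positivity) (norm_nonneg _)
    (by nlinarith [norm_nonneg (f x - f (-x))])

lemma integrable_symmDiffQuot {f : ℝ → E} {K : NNReal} (hf : LipschitzWith K f)
    (hfi : Integrable f) : Integrable (symmDiffQuot f) := by
  have hmeas : AEStronglyMeasurable (symmDiffQuot f) :=
    (by fun_prop : Measurable fun x : ℝ => (2 * x)⁻¹).aestronglyMeasurable.smul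
      (hf.continuous.comp continuous_neg |> hf.continuous.sub).aestronglyMeasurable
  have hbound : Integrable fun x => (Set.Icc (-1) 1).indicator (fun _ => (K : ℝ)) x
      + ‖f x - f (-x)‖ :=
    ((integrable_indicator_iff measurableSet_Icc).2 (integrableOn_const measure_Icc_lt_top.ne)).add
      (hfi.sub hfi.comp_neg).norm
  refine hbound.mono' hmeas (ae_of_all _ fun x => ?_)
  by_cases hx : x ∈ Set.Icc (-1) 1
  · rw [Set.indicator_of_mem hx]
    exact (norm_symmDiffQuot_le hf x).trans (le_add_of_nonneg_right (norm_nonneg _))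
  · rw [Set.indicator_of_notMem hx, zero_add]
    exact norm_symmDiffQuot_le_of_one_le_abs f (not_le.1 (hx ∘ abs_le.1)).le

lemma integral_eq_integral_half_smul_add_comp_neg {h : ℝ → E} (hh : Integrable h) :
    ∫ x, h x = ∫ x, (2 : ℝ)⁻¹ • (h x + h (-x)) := by
  rw [integral_smul, integral_add hh hh.comp_neg, integral_neg_eq_self, ← two_smul ℝ,
    smul_smul, inv_mul_cancel₀ two_ne_zero, one_smul]

lemma measurableSet_lt_abs (ε : ℝ) : MeasurableSet {x : ℝ | ε < |x|} :=
  measurableSet_lt measurable_const measurable_abs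

lemma setIntegral_inv_smul_eq_setIntegral_symmDiffQuot {f : ℝ → E} (hf : Integrable f)
    {ε : ℝ} (hε : 0 < ε) :
    ∫ x in {x : ℝ | ε < |x|}, x⁻¹ • f x = ∫ x in {x : ℝ | ε < |x|}, symmDiffQuot f x := by
  have hint : IntegrableOn (fun x => x⁻¹ • f x) {x : ℝ | ε < |x|} :=
    hf.integrableOn.bdd_smul ε⁻¹ (by fun_prop) <|
      (ae_restrict_mem (measurableSet_lt_abs ε)).mono fun x (hx : ε < |x|) => by
        rw [norm_inv, Real.norm_eq_abs]
        exact inv_anti₀ hε hx.le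
  rw [← integral_indicator (measurableSet_lt_abs ε), ← integral_indicator (measurableSet_lt_abs ε),
    integral_eq_integral_half_smul_add_comp_neg
      ((integrable_indicator_iff (measurableSet_lt_abs ε)).2 hint)]
  congr 1 with x
  have hneg : -x ∈ {x : ℝ | ε < |x|} ↔ x ∈ {x : ℝ | ε < |x|} := by
    simp only [Set.mem_ofPred_eq, abs_neg]
  by_cases hx : x ∈ {x : ℝ | ε < |x|}
  · simp only [Set.indicator_of_mem hx, Set.indicator_of_mem (hneg.2 hx), symmDiffQuot, inv_neg,
      neg_smul, mul_inv]
    module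
  · simp only [Set.indicator_of_notMem hx, Set.indicator_of_notMem (mt hneg.1 hx), add_zero,
      smul_zero]

lemma tendsto_setIntegral_lt_abs {g : ℝ → E} (hg : Integrable g) :
    Tendsto (fun ε => ∫ x in {x : ℝ | ε < |x|}, g x) (𝓝 0) (𝓝 (∫ x, g x)) := by
  simp_rw [← integral_indicator (measurableSet_lt_abs _)]
  refine tendsto_integral_filter_of_dominated_convergence (fun x => ‖g x‖)
    (.of_forall fun ε => hg.aestronglyMeasurable.indicator (measurableSet_lt_abs ε))
    (.of_forall fun ε => ae_of_all _ fun x => norm_indicator_le_norm_self g x) hg.norm ?_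
  filter_upwards [Measure.ae_ne volume 0] with x hx
  refine tendsto_const_nhds.congr' ?_
  filter_upwards [eventually_lt_nhds (abs_pos.2 hx)] with ε hε
  exact (Set.indicator_of_mem (show x ∈ {x : ℝ | ε < |x|} from hε) g).symm

lemma integrable_div_sq_add_sq_smul {f : ℝ → E} (hf : Integrable f) {ε : ℝ} (hε : 0 < ε) :
    Integrable fun x => (x / (ε ^ 2 + x ^ 2)) • f x :=
  hf.bdd_smul ε⁻¹
    (by fun_prop : Measurable fun x : ℝ => x / (ε ^ 2 + x ^ 2)).aestronglyMeasurable <|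
    ae_of_all _ fun x => by
      rw [norm_div, Real.norm_eq_abs, Real.norm_of_nonneg (by positivity),
        div_le_iff₀ (by positivity), inv_mul_eq_div, le_div_iff₀ hε]
      nlinarith [sq_abs x, sq_nonneg (ε - |x|)]

lemma integral_div_sq_add_sq_smul_eq {f : ℝ → E} (hf : Integrable f) {ε : ℝ} (hε : 0 < ε) :
    ∫ x, (x / (ε ^ 2 + x ^ 2)) • f x = ∫ x, (x ^ 2 / (ε ^ 2 + x ^ 2)) • symmDiffQuot f x := by
  rw [integral_eq_integral_half_smul_add_comp_neg (integrable_div_sq_add_sq_smul hf hε)]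
  congr 1 with x
  rcases eq_or_ne x 0 with rfl | hx
  · simp
  have hc : (2 : ℝ)⁻¹ * (x / (ε ^ 2 + x ^ 2)) = x ^ 2 / (ε ^ 2 + x ^ 2) * (2 * x)⁻¹ := by
    field_simp
  simp only [symmDiffQuot, neg_sq, neg_div, neg_smul]
  linear_combination (norm := module) hc • (f x - f (-x))

lemma tendsto_norm_mul_cauchyPDFReal_cobounded :
    Tendsto (fun x : ℝ => ‖x‖ * cauchyPDFReal 0 1 x) (cobounded ℝ) (𝓝 0) := by
  have hle : ∀ x : ℝ, ‖x‖ * cauchyPDFReal 0 1 x ≤ π⁻¹ * ‖x‖⁻¹ := by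
    intro x
    rcases eq_or_ne x 0 with rfl | hx
    · simp
    have hx' : 0 < |x| := abs_pos.2 hx
    simp only [cauchyPDFReal_def, NNReal.coe_one, sub_zero, one_pow, mul_one, Real.norm_eq_abs]
    rw [mul_left_comm]
    gcongr
    rw [← div_eq_mul_inv, div_le_iff₀ (by positivity), inv_mul_eq_div, le_div_iff₀ hx']
    nlinarith [sq_abs x]
  refine squeeze_zero (fun x => mul_nonneg (norm_nonneg x) (cauchyPDF_pos 0 one_ne_zero x).le)
    hle ?_
  simpa only [mul_zero, Pi.inv_apply] using
    (tendsto_norm_cobounded_atTop.inv_tendsto_atTop).const_mul π⁻¹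

lemma tendsto_integral_div_sq_add_sq_smul [CompleteSpace E] {g : ℝ → E} (hg : Integrable g)
    (hg0 : ContinuousAt g 0) :
    Tendsto (fun ε => ∫ x, (ε / (ε ^ 2 + x ^ 2)) • g x) (𝓝[>] 0) (𝓝 (π • g 0)) := by
  have hpeak := tendsto_integral_comp_smul_smul_of_integrable (μ := volume)
    (fun x => (cauchyPDF_pos 0 one_ne_zero x).le) (integral_cauchyPDFReal_eq_one 0 one_ne_zero)
    (by simpa using tendsto_norm_mul_cauchyPDFReal_cobounded) hg hg0
  simp only [Module.finrank_self, pow_one, smul_eq_mul] at hpeak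
  refine ((hpeak.comp tendsto_inv_nhdsGT_zero).const_smul π).congr' ?_
  filter_upwards [self_mem_nhdsWithin] with ε (hε : 0 < ε)
  rw [Function.comp_apply, ← integral_smul]
  congr 1 with x
  rw [smul_smul, cauchyPDFReal_def, NNReal.coe_one]
  congr 1
  field_simp
  ring

lemma tendsto_integral_sq_div_sq_add_sq_smul {g : ℝ → E} (hg : Integrable g) :
    Tendsto (fun ε => ∫ x, (x ^ 2 / (ε ^ 2 + x ^ 2)) • g x) (𝓝 0) (𝓝 (∫ x, g x)) := by
  refine tendsto_integral_filter_of_dominated_convergence (fun x => ‖g x‖)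
    (.of_forall fun ε => (by fun_prop : Measurable fun x : ℝ => x ^ 2 / (ε ^ 2 + x ^ 2))
      |>.aestronglyMeasurable.smul hg.aestronglyMeasurable)
    (.of_forall fun ε => ae_of_all _ fun x => ?_) hg.norm ?_
  · rw [norm_smul, Real.norm_of_nonneg (by positivity)]
    exact mul_le_of_le_one_left (norm_nonneg _) (div_le_one_of_le₀ (by nlinarith) (by positivity))
  filter_upwards [Measure.ae_ne volume 0] with x hx
  have hcont : Continuous fun ε : ℝ => x ^ 2 / (ε ^ 2 + x ^ 2) :=
    continuous_const.div (by fun_prop) fun ε => by positivity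
  simpa [div_self (pow_ne_zero 2 hx)] using (hcont.tendsto 0).smul_const (g x)

lemma div_ofReal_add_mul_I {σ : ℝ} (hσ : σ ^ 2 = 1) {ε : ℝ} (hε : ε ≠ 0) (x : ℝ) (z : ℂ) :
    z / (ε + σ * Complex.I * x) =
      (ε / (ε ^ 2 + x ^ 2)) • z - σ * Complex.I * ((x / (ε ^ 2 + x ^ 2)) • z) := by
  have hne : (ε : ℂ) + σ * Complex.I * x ≠ 0 := fun h => hε (by simpa using congrArg Complex.re h)
  have hd : (ε : ℂ) ^ 2 + x ^ 2 ≠ 0 := by exact_mod_cast (by positivity : ε ^ 2 + x ^ 2 ≠ 0)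
  rw [div_eq_iff hne, Complex.real_smul, Complex.real_smul]
  push_cast
  field_simp
  have hσ' : (σ : ℂ) ^ 2 = 1 := by exact_mod_cast hσ
  linear_combination (z * x ^ 2 * σ ^ 2) * Complex.I_sq - z * x ^ 2 * hσ'

lemma integral_div_ofReal_add_mul_I {f : ℝ → ℂ} (hf : Integrable f) {σ : ℝ} (hσ : σ ^ 2 = 1)
    {ε : ℝ} (hε : 0 < ε) :
    ∫ x, f x / (ε + σ * Complex.I * x) =
      (∫ x, (ε / (ε ^ 2 + x ^ 2)) • f x) - σ * Complex.I * ∫ x, (x / (ε ^ 2 + x ^ 2)) • f x := by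
  have hint : Integrable fun x => (ε / (ε ^ 2 + x ^ 2)) • f x :=
    hf.bdd_smul ε⁻¹
      (by fun_prop : Measurable fun x : ℝ => ε / (ε ^ 2 + x ^ 2)).aestronglyMeasurable <|
      ae_of_all _ fun x => by
        rw [Real.norm_of_nonneg (by positivity), div_le_iff₀ (by positivity), inv_mul_eq_div,
          le_div_iff₀ hε]
        nlinarith [sq_nonneg x]
  simp_rw [div_ofReal_add_mul_I hσ hε.ne']
  rw [integral_sub hint ((integrable_div_sq_add_sq_smul hf hε).const_mul _), integral_const_mul]

lemma SchwartzMap.exists_lipschitzWith (φ : SchwartzMap ℝ E) : ∃ K, LipschitzWith K φ :=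
  ⟨_, lipschitzWith_of_nnnorm_deriv_le φ.differentiable fun x =>
    (SchwartzMap.derivCLM ℝ E φ).toBoundedContinuousFunction.nnnorm_coe_le_nnnorm x⟩

/-- Sokhotski–Plemelj formula: for every Schwartz function `φ` and each sign `σ ∈ {1, -1}`,
the limit `lim_{ε→0⁺} ∫ φ(x)/(ε + σ·i·x) dx` exists and equals
`π·φ(0) − σ·i·Vp(1/x)[φ]`, the principal-value limit existing as well. -/
theorem sokhotski_plemelj (φ : SchwartzMap ℝ ℂ) (σ : ℝ) (hσ : σ = 1 ∨ σ = -1) :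
    ∃ pv : ℂ,
      Tendsto (fun ε : ℝ => ∫ x in {x : ℝ | ε < |x|}, φ x / (x : ℂ))
        (nhdsWithin 0 (Set.Ioi 0)) (nhds pv) ∧
      Tendsto (fun ε : ℝ => ∫ x : ℝ, φ x / ((ε : ℂ) + (σ : ℂ) * Complex.I * (x : ℂ)))
        (nhdsWithin 0 (Set.Ioi 0))
        (nhds ((π : ℂ) * φ 0 - (σ : ℂ) * Complex.I * pv)) := by
  obtain ⟨K, hK⟩ := φ.exists_lipschitzWith
  have hq : Integrable (symmDiffQuot φ) := integrable_symmDiffQuot hK φ.integrable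
  have hσ2 : σ ^ 2 = 1 := by rcases hσ with rfl | rfl <;> norm_num
  refine ⟨∫ x, symmDiffQuot φ x, ?_, ?_⟩
  · refine ((tendsto_setIntegral_lt_abs hq).mono_left nhdsWithin_le_nhds).congr' ?_
    filter_upwards [self_mem_nhdsWithin] with ε (hε : 0 < ε)
    rw [← setIntegral_inv_smul_eq_setIntegral_symmDiffQuot φ.integrable hε]
    simp_rw [Complex.real_smul, Complex.ofReal_inv, div_eq_inv_mul]
  · have hA := tendsto_integral_div_sq_add_sq_smul φ.integrable φ.continuous.continuousAt
    have hB := (tendsto_integral_sq_div_sq_add_sq_smul hq).mono_left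
      (nhdsWithin_le_nhds (s := Set.Ioi 0))
    rw [Complex.real_smul] at hA
    refine (hA.sub (hB.const_mul (σ * Complex.I))).congr' ?_
    filter_upwards [self_mem_nhdsWithin] with ε (hε : 0 < ε)
    rw [integral_div_ofReal_add_mul_I φ.integrable hσ2 hε,
      integral_div_sq_add_sq_smul_eq φ.integrable hε]
end

section
/- Regularized Fourier integral of a fractional power: Let α > −1 be real, ε > 0, and k ∈ ℝ. Define x^α for negative x by the branch with log(−1) = −iπ, i.e. x^α := e^{−iπα}·|x|^α for x < 0 and x^α := x^α (real power) for x > 0. Then ∫_ℝ x^α · e^{−ikx − ε|x|} dx = Γ(α+1) · ( e^{−iπα}·(ε − ik)^{−α−1} + (ε + ik)^{−α−1} ), where (ε ∓ ik)^{−α−1} is the principal complex power (which is unambiguous since Re(ε ∓ ik) = ε > 0) and Γ is the Gamma function. -/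
open MeasureTheory Real

/-- The fractional power `x^α` on the real line with the branch convention `log(−1) = −iπ`:
`x^α = e^{−iπα}|x|^α` for `x < 0` and the usual real power for `x ≥ 0`. -/
noncomputable def branchPow (α : ℝ) (x : ℝ) : ℂ :=
  if x < 0 then Complex.exp (-(π : ℂ) * Complex.I * (α : ℂ)) * ((|x| ^ α : ℝ) : ℂ)
  else ((x ^ α : ℝ) : ℂ)

/-!
Split the integral at `0` and reflect the negative half-line. On each half-line the integrand
becomes `t^α e^{-wt}` with `w = ε ± ik` (times `e^{-iπα}` on the reflected side), so everything
reduces to the Laplace transform `∫₀^∞ t^a e^{-wt} dt = Γ(a+1) w^{-a-1}`. Mathlib knows this for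
real `w > 0`; both sides are holomorphic in `w` on the half-plane `Re w > 0` (the left one by
differentiation under the integral sign), so the identity theorem extends it to complex `w`.
-/

open Set Filter Complex
open scoped Topology

theorem integral_eq_integral_Ioi_comp_neg_add_integral_Ioi {E : Type*} [NormedAddCommGroup E]
    [NormedSpace ℝ E] {f : ℝ → E} (hneg : IntegrableOn (fun x => f (-x)) (Ioi 0))
    (hpos : IntegrableOn f (Ioi 0)) :
    ∫ x, f x = (∫ x in Ioi 0, f (-x)) + ∫ x in Ioi 0, f x := by
  have hIio : IntegrableOn f (Iio 0) := by
    simpa only [neg_neg, neg_zero] using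
      IntegrableOn.comp_neg_Iio (f := fun x => f (-x)) (c := 0) (by simpa only [neg_zero])
  rw [← intervalIntegral.integral_Iic_add_Ioi (Iff.mpr integrableOn_Iic_iff_integrableOn_Iio hIio)
    hpos, integral_comp_neg_Ioi, neg_zero]

theorem norm_ofReal_cpow_mul_cexp_neg_mul {t : ℝ} (ht : 0 < t) (a w : ℂ) :
    ‖(t : ℂ) ^ a * cexp (-(w * t))‖ = t ^ a.re * Real.exp (-(w.re * t)) := by
  rw [norm_mul, norm_cpow_eq_rpow_re_of_pos ht, norm_exp]
  simp

theorem integrableOn_Ioi_rpow_mul_exp_neg_mul {s b : ℝ} (hs : -1 < s) (hb : 0 < b) :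
    IntegrableOn (fun t : ℝ => t ^ s * Real.exp (-(b * t))) (Ioi 0) := by
  simpa [neg_mul] using integrableOn_rpow_mul_exp_neg_mul_rpow hs zero_lt_one hb

theorem continuousOn_ofReal_cpow_mul (a : ℂ) {g : ℝ → ℂ} (hg : Continuous g) :
    ContinuousOn (fun t : ℝ => (t : ℂ) ^ a * g t) (Ioi 0) := fun t ht =>
  ((continuousAt_ofReal_cpow_const t a (Or.inr (ne_of_gt ht))).mul
    hg.continuousAt).continuousWithinAt

theorem integrableOn_Ioi_cpow_mul_cexp_neg_mul {a w : ℂ} (ha : -1 < a.re) (hw : 0 < w.re) :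
    IntegrableOn (fun t : ℝ => (t : ℂ) ^ a * cexp (-(w * t))) (Ioi 0) := by
  refine (integrable_norm_iff ((continuousOn_ofReal_cpow_mul a (by fun_prop)).aestronglyMeasurable
    measurableSet_Ioi)).mp ?_
  exact (integrableOn_Ioi_rpow_mul_exp_neg_mul ha hw).congr_fun
    (fun t ht => (norm_ofReal_cpow_mul_cexp_neg_mul ht a w).symm) measurableSet_Ioi

theorem half_re_lt_re_of_mem_ball {w z : ℂ} (hz : z ∈ Metric.ball w (w.re / 2)) :
    w.re / 2 < z.re := by
  have h := (abs_re_le_norm (z - w)).trans_lt (mem_ball_iff_norm.mp hz)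
  rw [sub_re] at h
  linarith [(abs_lt.mp h).1]

theorem differentiableOn_integral_Ioi_cpow_mul_cexp_neg_mul {a : ℂ} (ha : -1 < a.re) :
    DifferentiableOn ℂ (fun w => ∫ t in Ioi (0 : ℝ), (t : ℂ) ^ a * cexp (-(w * t)))
      {w | 0 < w.re} := by
  intro w (hw : 0 < w.re)
  have hb : 0 < w.re / 2 := half_pos hw
  refine (hasDerivAt_integral_of_dominated_loc_of_deriv_le
    (μ := volume.restrict (Ioi 0))
    (F := fun z (t : ℝ) => (t : ℂ) ^ a * cexp (-(z * t)))
    (F' := fun z (t : ℝ) => (t : ℂ) ^ a * (-(t : ℂ) * cexp (-(z * t))))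
    (bound := fun t : ℝ => t ^ (a.re + 1) * Real.exp (-(w.re / 2 * t)))
    (Metric.ball_mem_nhds w hb)
    (Eventually.of_forall fun z =>
      (continuousOn_ofReal_cpow_mul a (by fun_prop)).aestronglyMeasurable measurableSet_Ioi)
    (integrableOn_Ioi_cpow_mul_cexp_neg_mul ha hw)
    ((continuousOn_ofReal_cpow_mul a (by fun_prop)).aestronglyMeasurable measurableSet_Ioi) ?_
    (integrableOn_Ioi_rpow_mul_exp_neg_mul (by linarith) hb) ?_).2.differentiableAt
    |>.differentiableWithinAt
  · filter_upwards [ae_restrict_mem measurableSet_Ioi] with t (ht : 0 < t) z hz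
    rw [mul_left_comm, norm_mul, norm_neg, norm_real, Real.norm_of_nonneg ht.le,
      norm_ofReal_cpow_mul_cexp_neg_mul ht, rpow_add_one ht.ne', mul_left_comm, mul_assoc]
    gcongr
    linarith [half_re_lt_re_of_mem_ball hz]
  · filter_upwards [ae_restrict_mem measurableSet_Ioi] with t (ht : 0 < t) z _
    have := ((hasDerivAt_mul_const (x := z) (t : ℂ)).fun_neg.cexp).const_mul ((t : ℂ) ^ a)
    exact this.congr_deriv (by ring)

theorem integral_Ioi_cpow_mul_cexp_neg_ofReal_mul {a : ℂ} (ha : -1 < a.re) {r : ℝ}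
    (hr : 0 < r) :
    ∫ t in Ioi (0 : ℝ), (t : ℂ) ^ a * cexp (-(r * t)) = Gamma (a + 1) * (r : ℂ) ^ (-a - 1) := by
  have h := integral_cpow_mul_exp_neg_mul_Ioi (a := a + 1) (by rw [add_re, one_re]; linarith) hr
  rw [add_sub_cancel_right, one_div,
    inv_cpow _ _ (by rw [arg_ofReal_of_nonneg hr.le]; exact pi_ne_zero.symm), ← cpow_neg] at h
  rw [h, mul_comm, neg_add']

theorem frequently_nhdsNE_ofReal_of_eventually_nhds {p : ℂ → Prop} {x : ℝ}
    (h : ∀ᶠ r : ℝ in 𝓝 x, p r) :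
    ∃ᶠ z in 𝓝[≠] (x : ℂ), p z :=
  (continuous_ofReal.continuousWithinAt.tendsto_nhdsWithin fun _ hr => by
    simpa using hr : Tendsto ofReal (𝓝[≠] x) (𝓝[≠] (x : ℂ))).frequently
    (eventually_nhdsWithin_of_eventually_nhds h).frequently

theorem integral_Ioi_cpow_mul_cexp_neg_mul {a w : ℂ} (ha : -1 < a.re) (hw : 0 < w.re) :
    ∫ t in Ioi (0 : ℝ), (t : ℂ) ^ a * cexp (-(w * t)) = Gamma (a + 1) * w ^ (-a - 1) := by
  have hU : IsOpen {z : ℂ | 0 < z.re} := isOpen_lt continuous_const continuous_re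
  have hrhs : DifferentiableOn ℂ (fun z : ℂ => Gamma (a + 1) * z ^ (-a - 1)) {z | 0 < z.re} :=
    fun z hz => ((differentiableAt_id.cpow_const (Or.inl hz)).const_mul _).differentiableWithinAt
  refine ((differentiableOn_integral_Ioi_cpow_mul_cexp_neg_mul ha).analyticOnNhd hU)
    |>.eqOn_of_preconnected_of_frequently_eq (hrhs.analyticOnNhd hU)
    (convex_halfSpace_re_gt 0).isPreconnected (z₀ := 1) (by simp) ?_ hw
  simpa using frequently_nhdsNE_ofReal_of_eventually_nhds (x := 1)
    ((lt_mem_nhds one_pos).mono fun r hr => integral_Ioi_cpow_mul_cexp_neg_ofReal_mul ha hr)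

theorem branchPow_of_pos (α : ℝ) {x : ℝ} (hx : 0 < x) :
    branchPow α x = (x : ℂ) ^ (α : ℂ) := by
  rw [branchPow, if_neg hx.not_gt, ofReal_cpow hx.le]

theorem branchPow_neg_of_pos (α : ℝ) {x : ℝ} (hx : 0 < x) :
    branchPow α (-x) = cexp (-(π : ℂ) * I * α) * (x : ℂ) ^ (α : ℂ) := by
  rw [branchPow, if_pos (neg_neg_of_pos hx), abs_neg, abs_of_pos hx, ofReal_cpow hx.le]

theorem regularized_integrand_of_pos (α ε k : ℝ) {x : ℝ} (hx : 0 < x) :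
    branchPow α x * cexp (-I * k * x - ((ε * |x| : ℝ) : ℂ)) =
      (x : ℂ) ^ (α : ℂ) * cexp (-((ε + I * k) * x)) := by
  rw [branchPow_of_pos α hx, abs_of_pos hx]
  congr 2
  push_cast
  ring

theorem regularized_integrand_neg_of_pos (α ε k : ℝ) {x : ℝ} (hx : 0 < x) :
    branchPow α (-x) * cexp (-I * k * ↑(-x) - ((ε * |-x| : ℝ) : ℂ)) =
      cexp (-(π : ℂ) * I * α) * ((x : ℂ) ^ (α : ℂ) * cexp (-((ε - I * k) * x))) := by
  rw [branchPow_neg_of_pos α hx, abs_neg, abs_of_pos hx, mul_assoc]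
  congr 3
  push_cast
  ring

/-- Regularized Fourier integral of a fractional power: for `α > −1`, `ε > 0`, `k ∈ ℝ`,
`∫ x^α e^{−ikx−ε|x|} dx = Γ(α+1)·(e^{−iπα}(ε−ik)^{−α−1} + (ε+ik)^{−α−1})`. -/
theorem regularized_fourier_fractional_power (α ε k : ℝ) (hα : -1 < α) (hε : 0 < ε) :
    ∫ x : ℝ, branchPow α x * Complex.exp (-Complex.I * (k : ℂ) * (x : ℂ) - ((ε * |x| : ℝ) : ℂ)) =
      (Real.Gamma (α + 1) : ℂ) *
        (Complex.exp (-(π : ℂ) * Complex.I * (α : ℂ)) *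
            ((ε : ℂ) - Complex.I * (k : ℂ)) ^ ((-α - 1 : ℝ) : ℂ) +
          ((ε : ℂ) + Complex.I * (k : ℂ)) ^ ((-α - 1 : ℝ) : ℂ)) := by
  have hα' : -1 < (α : ℂ).re := by simpa using hα
  have hminus : 0 < ((ε : ℂ) - I * k).re := by simpa using hε
  have hplus : 0 < ((ε : ℂ) + I * k).re := by simpa using hε
  have hneg := fun x (hx : x ∈ Ioi (0 : ℝ)) => regularized_integrand_neg_of_pos α ε k hx
  have hpos := fun x (hx : x ∈ Ioi (0 : ℝ)) => regularized_integrand_of_pos α ε k hx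
  rw [integral_eq_integral_Ioi_comp_neg_add_integral_Ioi
      (IntegrableOn.congr_fun ((integrableOn_Ioi_cpow_mul_cexp_neg_mul hα' hminus).const_mul _)
        (fun x hx => (hneg x hx).symm) measurableSet_Ioi)
      ((integrableOn_Ioi_cpow_mul_cexp_neg_mul hα' hplus).congr_fun
        (fun x hx => (hpos x hx).symm) measurableSet_Ioi),
    setIntegral_congr_fun measurableSet_Ioi hneg, setIntegral_congr_fun measurableSet_Ioi hpos,
    integral_const_mul, integral_Ioi_cpow_mul_cexp_neg_mul hα' hminus,
    integral_Ioi_cpow_mul_cexp_neg_mul hα' hplus, ← ofReal_one, ← ofReal_add, Gamma_ofReal]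
  push_cast
  ring
end

section
/- Distributional Fourier transform of the principal value 1/x: For every Schwartz function φ : ℝ → ℂ with Fourier transform φ̂(k) = ∫_ℝ φ(x)e^{−ikx}dx, one has lim_{ε→0⁺} ∫_{|x|>ε} φ̂(x)/x dx = −iπ·∫_ℝ sgn(x)·φ(x) dx, where sgn is the sign function. -/
open MeasureTheory Filter Real

/-- The Fourier transform `φ̂(k) = ∫ φ(x) e^{−ikx} dx` of a Schwartz function. -/
noncomputable def fourierT (φ : SchwartzMap ℝ ℂ) (k : ℝ) : ℂ :=
  ∫ x : ℝ, φ x * Complex.exp (-Complex.I * (k : ℂ) * (x : ℂ))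

open Set Topology FourierTransform

/-!
Pairing `x` with `−x` turns the truncated integral into `∫_{k>ε} (φ̂(k) − φ̂(−k))/k dk`. Since
`φ̂(k) − φ̂(−k) = −2i ∫ sin(kx) φ(x) dx` and `|sin(kx)/k| ≤ |x|`, this integrand is bounded near `0`,
and it is integrable at infinity because `φ̂` is, so the limit `ε → 0⁺` is its integral over
`(0, ∞)`. That integral is evaluated by Abel summation: after inserting the factor `e^{−δk}`,
Fubini and `∫_0^∞ e^{−δk} sin(kx)/k dk = arctan(x/δ)` give `−2i ∫ arctan(x/δ) φ(x) dx`, and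
`arctan(x/δ) → (π/2) sgn x` as `δ → 0⁺`.
-/

lemma abs_sin_mul_div_le (k x : ℝ) : |sin (k * x) / k| ≤ |x| := by
  rcases eq_or_ne k 0 with rfl | hk
  · simp
  rw [abs_div, div_le_iff₀ (abs_pos.2 hk), mul_comm, ← abs_mul]
  exact abs_sin_le_abs

section LaplaceKernel

variable {δ : ℝ}

lemma integral_exp_neg_mul_mul_cos (hδ : 0 < δ) (x : ℝ) :
    ∫ k in Ioi (0 : ℝ), exp (-δ * k) * cos (k * x) = δ / (δ ^ 2 + x ^ 2) := by
  -- the real part of `∫_0^∞ e^{ak} dk = −1/a` for `a = ix − δ`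
  set a : ℂ := x * Complex.I - δ
  have ha : a.re < 0 := by simp [a, hδ]
  have hre : ∀ k : ℝ, exp (-δ * k) * cos (k * x) = (Complex.exp (a * k)).re := by
    intro k
    simp [a, Complex.exp_re, mul_comm]
  calc ∫ k in Ioi (0 : ℝ), exp (-δ * k) * cos (k * x)
      = (∫ k in Ioi (0 : ℝ), Complex.exp (a * k)).re := by
        simp_rw [hre]; exact integral_re (integrableOn_exp_mul_complex_Ioi ha 0)
    _ = δ / (δ ^ 2 + x ^ 2) := by
      rw [integral_exp_mul_complex_Ioi ha 0]
      simp [Complex.div_re, Complex.normSq_apply, a, sq]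

lemma integrableOn_exp_neg_mul_mul_sin_div (hδ : 0 < δ) (x : ℝ) :
    IntegrableOn (fun k : ℝ => exp (-δ * k) * (sin (k * x) / k)) (Ioi 0) := by
  refine ((exp_neg_integrableOn_Ioi 0 hδ).mul_const |x|).mono' (by fun_prop) ?_
  filter_upwards with k
  rw [norm_mul, norm_of_nonneg (exp_pos _).le, Real.norm_eq_abs]
  exact mul_le_mul_of_nonneg_left (abs_sin_mul_div_le k x) (exp_pos _).le

lemma hasDerivAt_integral_exp_neg_mul_mul_sin_div (hδ : 0 < δ) (x : ℝ) :
    HasDerivAt (fun y => ∫ k in Ioi (0 : ℝ), exp (-δ * k) * (sin (k * y) / k))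
      (δ / (δ ^ 2 + x ^ 2)) x := by
  rw [← integral_exp_neg_mul_mul_cos hδ x]
  refine (hasDerivAt_integral_of_dominated_loc_of_deriv_le (μ := volume.restrict (Ioi 0))
    (F := fun y k => exp (-δ * k) * (sin (k * y) / k))
    (F' := fun y k => exp (-δ * k) * cos (k * y)) (Metric.ball_mem_nhds x one_pos)
    (bound := fun k => exp (-δ * k)) (Eventually.of_forall fun y => ?_)
    (integrableOn_exp_neg_mul_mul_sin_div hδ x) (by fun_prop) ?_
    (exp_neg_integrableOn_Ioi 0 hδ) ?_).2
  · exact (integrableOn_exp_neg_mul_mul_sin_div hδ y).aestronglyMeasurable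
  · filter_upwards with k y _
    rw [norm_mul, norm_of_nonneg (exp_pos _).le]
    exact mul_le_of_le_one_right (exp_pos _).le (abs_cos_le_one _)
  · filter_upwards [ae_restrict_mem measurableSet_Ioi] with k (hk : 0 < k) y _
    have := (((hasDerivAt_id' y).const_mul k).sin.div_const k).const_mul (exp (-δ * k))
    refine this.congr_deriv ?_
    field_simp

lemma integral_exp_neg_mul_mul_sin_div (hδ : 0 < δ) (x : ℝ) :
    ∫ k in Ioi (0 : ℝ), exp (-δ * k) * (sin (k * x) / k) = arctan (x / δ) := by
  have harctan : ∀ y, HasDerivAt (fun y => arctan (y / δ)) (δ / (δ ^ 2 + y ^ 2)) y := by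
    intro y
    convert ((hasDerivAt_id' y).div_const δ).arctan using 1
    field_simp
  have := is_const_of_deriv_eq_zero
    (fun y => ((hasDerivAt_integral_exp_neg_mul_mul_sin_div hδ y).sub (harctan y)).differentiableAt)
    (fun y => ((hasDerivAt_integral_exp_neg_mul_mul_sin_div hδ y).sub (harctan y)).deriv.trans
      (sub_self _)) x 0
  simpa [sub_eq_zero] using this

end LaplaceKernel

section Abel

variable {E : Type*} [NormedAddCommGroup E] [NormedSpace ℝ E]

lemma tendsto_arctan_div_nhdsGT_zero (x : ℝ) :
    Tendsto (fun δ => arctan (x / δ)) (𝓝[>] 0) (𝓝 (π / 2 * sign x)) := by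
  simp_rw [div_eq_mul_inv]
  rcases lt_trichotomy x 0 with hx | rfl | hx
  · rw [sign_of_neg hx, mul_neg_one]
    exact (tendsto_arctan_atBot.mono_right nhdsWithin_le_nhds).comp
      (tendsto_inv_nhdsGT_zero.const_mul_atTop_of_neg hx)
  · simp
  · rw [sign_of_pos hx, mul_one]
    exact (tendsto_arctan_atTop.mono_right nhdsWithin_le_nhds).comp
      (tendsto_inv_nhdsGT_zero.const_mul_atTop hx)

lemma tendsto_integral_arctan_div_smul {g : ℝ → E} (hg : Integrable g) :
    Tendsto (fun δ => ∫ x, arctan (x / δ) • g x) (𝓝[>] 0)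
      (𝓝 (∫ x, (π / 2 * sign x) • g x)) := by
  refine tendsto_integral_filter_of_dominated_convergence (fun x => π / 2 * ‖g x‖)
    (Eventually.of_forall fun δ => ?_) (Eventually.of_forall fun δ => ?_)
    (hg.norm.const_mul _) (ae_of_all _ fun x => ?_)
  · exact (by fun_prop : Continuous fun x => arctan (x / δ)).aestronglyMeasurable.smul
      hg.aestronglyMeasurable
  · refine ae_of_all _ fun x => ?_
    rw [norm_smul, Real.norm_eq_abs]
    gcongr
    exact abs_le.2 ⟨(neg_pi_div_two_lt_arctan _).le, (arctan_lt_pi_div_two _).le⟩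
  · exact (tendsto_arctan_div_nhdsGT_zero x).smul_const (g x)

lemma tendsto_setIntegral_exp_neg_mul_smul {f : ℝ → E} (hf : IntegrableOn f (Ioi 0)) :
    Tendsto (fun δ => ∫ k in Ioi 0, exp (-δ * k) • f k) (𝓝[>] 0)
      (𝓝 (∫ k in Ioi 0, f k)) := by
  refine tendsto_integral_filter_of_dominated_convergence (fun k => ‖f k‖)
    (Eventually.of_forall fun δ => ?_) ?_ hf.norm (ae_of_all _ fun k => ?_)
  · exact (by fun_prop : Continuous fun k => exp (-δ * k)).aestronglyMeasurable.smul
      hf.aestronglyMeasurable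
  · filter_upwards [self_mem_nhdsWithin] with δ (hδ : 0 < δ)
    filter_upwards [ae_restrict_mem measurableSet_Ioi] with k (hk : 0 < k)
    rw [norm_smul, norm_of_nonneg (exp_pos _).le]
    refine mul_le_of_le_one_left (norm_nonneg _) (exp_le_one_iff.2 ?_)
    have := mul_pos hδ hk
    linarith
  · have : Continuous fun δ => exp (-δ * k) • f k := by fun_prop
    simpa using (this.tendsto 0).mono_left nhdsWithin_le_nhds

lemma setIntegral_lt_abs_eq_setIntegral_Ioi_add_neg {f : ℝ → E} {ε : ℝ} (hε : 0 ≤ ε)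
    (hf : IntegrableOn f {x | ε < |x|}) :
    ∫ x in {x | ε < |x|}, f x = ∫ x in Ioi ε, (f x + f (-x)) := by
  have hset : {x : ℝ | ε < |x|} = Iio (-ε) ∪ Ioi ε := by
    ext x
    simp only [mem_ofPred_eq, mem_union, mem_Iio, mem_Ioi, lt_abs]
    constructor <;> rintro (h | h) <;> first | (left; linarith) | (right; linarith)
  rw [hset] at hf ⊢
  have hdisj : Disjoint (Iio (-ε)) (Ioi ε) :=
    (Iic_disjoint_Ioi (by linarith)).mono_left Iio_subset_Iic_self
  rw [setIntegral_union hdisj measurableSet_Ioi (hf.mono_set subset_union_left)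
      (hf.mono_set subset_union_right),
    integral_add (hf.mono_set subset_union_right) (hf.mono_set subset_union_left).comp_neg_Ioi,
    integral_comp_neg_Ioi, integral_Iic_eq_integral_Iio, add_comm]

lemma setIntegral_exp_neg_mul_smul_integral_sin_div_smul [CompleteSpace E] {g : ℝ → E}
    (hg : AEStronglyMeasurable g) (hxg : Integrable fun x => ‖x‖ * ‖g x‖) {δ : ℝ} (hδ : 0 < δ) :
    ∫ k in Ioi 0, exp (-δ * k) • ∫ x, (sin (k * x) / k) • g x = ∫ x, arctan (x / δ) • g x := by
  set F : ℝ × ℝ → E := fun p => exp (-δ * p.1) • (sin (p.1 * p.2) / p.1) • g p.2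
  have hF : Integrable F ((volume.restrict (Ioi 0)).prod volume) := by
    refine ((exp_neg_integrableOn_Ioi 0 hδ).mul_prod hxg).mono' ?_ (ae_of_all _ fun p => ?_)
    · exact ((by fun_prop : Measurable fun p : ℝ × ℝ => exp (-δ * p.1)).aestronglyMeasurable.smul
        ((by fun_prop : Measurable fun p : ℝ × ℝ => sin (p.1 * p.2) / p.1).aestronglyMeasurable.smul
          hg.comp_snd))
    · simp only [F, norm_smul, norm_of_nonneg (exp_pos _).le, Real.norm_eq_abs, ← mul_assoc]
      gcongr ?_ * _
      exact mul_le_mul_of_nonneg_left (abs_sin_mul_div_le _ _) (exp_pos _).le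
  calc ∫ k in Ioi 0, exp (-δ * k) • ∫ x, (sin (k * x) / k) • g x
      = ∫ k in Ioi 0, ∫ x, F (k, x) := by simp only [F, integral_smul]
    _ = ∫ x, ∫ k in Ioi 0, F (k, x) := integral_integral_swap hF
    _ = ∫ x, arctan (x / δ) • g x := by
      congr 1 with x
      simp only [F, smul_smul]
      rw [integral_smul_const, integral_exp_neg_mul_mul_sin_div hδ]

end Abel

namespace SchwartzMap

variable (φ : SchwartzMap ℝ ℂ)

lemma fourierT_eq_fourier (k : ℝ) : fourierT φ k = 𝓕 φ (k / (2 * π)) := by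
  rw [fourier_coe, Real.fourier_real_eq_integral_exp_smul, fourierT]
  congr 1 with x
  rw [smul_eq_mul, mul_comm]
  congr 2
  push_cast
  field_simp

lemma integrable_fourierT : Integrable (fourierT φ) := by
  rw [funext φ.fourierT_eq_fourier]
  exact (𝓕 φ).integrable.comp_div (by positivity)

lemma continuous_fourierT : Continuous (fourierT φ) := by
  rw [funext φ.fourierT_eq_fourier]
  fun_prop

lemma integrableOn_fourierT_div {ε : ℝ} (hε : 0 < ε) :
    IntegrableOn (fun x : ℝ => fourierT φ x / x) {x | ε < |x|} := by
  refine ((φ.integrable_fourierT.norm.const_mul ε⁻¹).integrableOn).mono' ?_ ?_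
  · exact (φ.continuous_fourierT.measurable.div Complex.measurable_ofReal).aestronglyMeasurable
  · filter_upwards [ae_restrict_mem (measurableSet_lt measurable_const measurable_abs)] with x hx
    rw [norm_div, Complex.norm_real, Real.norm_eq_abs, div_eq_inv_mul]
    gcongr

lemma fourierT_sub_fourierT_neg (k : ℝ) :
    fourierT φ k - fourierT φ (-k) = -2 * Complex.I * ∫ x, sin (k * x) • φ x := by
  have hint (k : ℝ) : Integrable fun x : ℝ => φ x * Complex.exp (-Complex.I * k * x) :=
    φ.integrable.norm.mono' (by fun_prop) (ae_of_all _ fun x => by simp [Complex.norm_exp])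
  rw [fourierT, fourierT, ← integral_sub (hint k) (hint (-k)), ← integral_const_mul]
  congr 1 with x
  rw [Complex.real_smul, ← mul_sub, Complex.ofReal_sin, show -Complex.I * k * x = -↑(k * x) * Complex.I by push_cast; ring,
    show -Complex.I * ↑(-k) * x = ↑(k * x) * Complex.I by push_cast; ring]
  linear_combination (Complex.I * φ x) * Complex.two_sin ↑(k * x)
    + (Complex.exp (-↑(k * x) * Complex.I) - Complex.exp (↑(k * x) * Complex.I)) * φ x * Complex.I_sq

noncomputable def fourierOddQuot (k : ℝ) : ℂ := (fourierT φ k - fourierT φ (-k)) / k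

lemma fourierOddQuot_eq_integral (k : ℝ) :
    φ.fourierOddQuot k = -2 * Complex.I * ∫ x, (sin (k * x) / k) • φ x := by
  rw [fourierOddQuot, fourierT_sub_fourierT_neg, mul_div_assoc, ← integral_div]
  congr 2 with x
  simp only [Complex.real_smul]
  push_cast
  ring

lemma integrable_norm_mul_norm : Integrable fun x : ℝ => ‖x‖ * ‖φ x‖ := by
  simpa using φ.integrable_pow_mul volume 1

lemma norm_fourierOddQuot_le (k : ℝ) : ‖φ.fourierOddQuot k‖ ≤ 2 * ∫ x, ‖x‖ * ‖φ x‖ := by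
  rw [fourierOddQuot_eq_integral, norm_mul, show ‖-2 * Complex.I‖ = 2 by simp]
  gcongr
  refine norm_integral_le_of_norm_le φ.integrable_norm_mul_norm (ae_of_all _ fun x => ?_)
  rw [norm_smul, Real.norm_eq_abs]
  exact mul_le_mul_of_nonneg_right (abs_sin_mul_div_le k x) (norm_nonneg _)

lemma integrableOn_fourierOddQuot : IntegrableOn φ.fourierOddQuot (Ioi 0) := by
  have hmeas : AEStronglyMeasurable φ.fourierOddQuot :=
    ((φ.continuous_fourierT.sub (φ.continuous_fourierT.comp continuous_neg)).measurable.div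
      Complex.measurable_ofReal).aestronglyMeasurable
  rw [← Ioc_union_Ioi_eq_Ioi zero_le_one]
  refine IntegrableOn.union ?_ ?_
  · exact (integrableOn_const measure_Ioc_lt_top.ne).mono' hmeas.restrict
      (ae_of_all _ φ.norm_fourierOddQuot_le)
  · have hdiff : Integrable fun k => fourierT φ k - fourierT φ (-k) :=
      φ.integrable_fourierT.sub φ.integrable_fourierT.comp_neg
    refine hdiff.norm.integrableOn.mono' hmeas.restrict ?_
    filter_upwards [ae_restrict_mem measurableSet_Ioi] with k (hk : 1 < k)
    rw [fourierOddQuot, norm_div, Complex.norm_real, Real.norm_eq_abs]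
    exact div_le_self (norm_nonneg _) (by rw [abs_of_pos (by linarith)]; exact hk.le)

lemma setIntegral_exp_neg_mul_smul_fourierOddQuot {δ : ℝ} (hδ : 0 < δ) :
    ∫ k in Ioi 0, exp (-δ * k) • φ.fourierOddQuot k
      = -2 * Complex.I * ∫ x, arctan (x / δ) • φ x := by
  simp_rw [fourierOddQuot_eq_integral, ← mul_smul_comm]
  rw [integral_const_mul, setIntegral_exp_neg_mul_smul_integral_sin_div_smul
    φ.integrable.aestronglyMeasurable φ.integrable_norm_mul_norm hδ]

lemma setIntegral_Ioi_zero_fourierOddQuot :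
    ∫ k in Ioi 0, φ.fourierOddQuot k
      = -Complex.I * (π : ℂ) * ∫ x : ℝ, ((Real.sign x : ℝ) : ℂ) * φ x := by
  have hlim := (tendsto_integral_arctan_div_smul φ.integrable).const_mul (-2 * Complex.I)
  have hrhs : -2 * Complex.I * ∫ x, (π / 2 * sign x) • φ x
      = -Complex.I * (π : ℂ) * ∫ x : ℝ, ((Real.sign x : ℝ) : ℂ) * φ x := by
    simp_rw [Complex.real_smul, ← integral_const_mul]
    congr 1 with x
    push_cast
    ring
  refine tendsto_nhds_unique (tendsto_setIntegral_exp_neg_mul_smul φ.integrableOn_fourierOddQuot)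
    (hrhs ▸ hlim.congr' ?_)
  filter_upwards [self_mem_nhdsWithin] with δ hδ
  exact (φ.setIntegral_exp_neg_mul_smul_fourierOddQuot hδ).symm

end SchwartzMap

/-- Distributional Fourier transform of the principal value `1/x`:
`lim_{ε→0⁺} ∫_{|x|>ε} φ̂(x)/x dx = −iπ ∫ sgn(x) φ(x) dx`. -/
theorem fourier_principal_value (φ : SchwartzMap ℝ ℂ) :
    Tendsto (fun ε : ℝ => ∫ x in {x : ℝ | ε < |x|}, fourierT φ x / (x : ℂ))
      (nhdsWithin 0 (Set.Ioi 0))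
      (nhds (-Complex.I * (π : ℂ) * ∫ x : ℝ, ((Real.sign x : ℝ) : ℂ) * φ x)) := by
  rw [← φ.setIntegral_Ioi_zero_fourierOddQuot]
  refine ((φ.integrableOn_fourierOddQuot.continuousWithinAt_Ici_primitive_Ioi).mono
    Ioi_subset_Ici_self).congr' ?_
  filter_upwards [self_mem_nhdsWithin] with ε (hε : 0 < ε)
  rw [setIntegral_lt_abs_eq_setIntegral_Ioi_add_neg hε.le (φ.integrableOn_fourierT_div hε)]
  refine setIntegral_congr_fun measurableSet_Ioi fun x _ => ?_
  rw [SchwartzMap.fourierOddQuot]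
  push_cast
  ring
end

section
/- Distributional derivative of the principal value 1/x equals minus the finite part of 1/x²: For every Schwartz function φ : ℝ → ℂ, the limit lim_{ε→0⁺} ( ∫_{|x|>ε} φ(x)/x² dx − 2·φ(0)/ε ) exists and lim_{ε→0⁺} ∫_{|x|>ε} φ′(x)/x dx = lim_{ε→0⁺} ( ∫_{|x|>ε} φ(x)/x² dx − 2·φ(0)/ε ). -/
open MeasureTheory Filter Real

open Set Topology

/-!
Folding `{|x| > ε}` onto `(ε, ∞)` by `x ↦ -x` turns the truncated principal value of `φ'` into
`∫_ε^∞ (φ'(x) - φ'(-x)) / x dx`. Since `φ'` is Lipschitz, this integrand is bounded near `0`, so it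
is integrable on `(0, ∞)` and the principal value exists. One integration by parts gives
`∫_{|x|>ε} φ / x² = ∫_ε^∞ (φ'(x) - φ'(-x)) / x dx + (φ(ε) + φ(-ε)) / ε`, and
`(φ(ε) + φ(-ε) - 2φ(0)) / ε → 0` because the even function `φ(x) + φ(-x)` has derivative `0` at `0`.
-/

section DivisionByPowers

variable {𝕜 : Type*} [RCLike 𝕜]

theorem MeasureTheory.IntegrableOn.div_pow_of_le_abs {f : ℝ → 𝕜} {s : Set ℝ} {ε : ℝ}
    (hf : IntegrableOn f s) (hs : MeasurableSet s) (hε : 0 < ε) (hsε : ∀ x ∈ s, ε ≤ |x|)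
    (n : ℕ) : IntegrableOn (fun x => f x / (x : 𝕜) ^ n) s := by
  simp_rw [div_eq_inv_mul]
  refine hf.bdd_mul (c := (ε ^ n)⁻¹)
    (RCLike.measurable_ofReal.pow_const n).inv.aestronglyMeasurable ?_
  rw [ae_restrict_iff' hs]
  refine ae_of_all _ fun x hx => ?_
  rw [norm_inv, norm_pow, RCLike.norm_ofReal]
  exact inv_anti₀ (by positivity) (pow_le_pow_left₀ hε.le (hsε x hx) n)

theorem integrableOn_Ioi_div_of_norm_le_mul_abs {g : ℝ → 𝕜} {K : ℝ} (hg : Integrable g)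
    (hK : ∀ x, ‖g x‖ ≤ K * |x|) : IntegrableOn (fun x => g x / x) (Ioi 0) := by
  rw [← Ioc_union_Ioi_eq_Ioi zero_le_one]
  refine IntegrableOn.union ?_ ?_
  · refine Measure.integrableOn_of_bounded measure_Ioc_lt_top.ne
      (hg.1.div₀ RCLike.measurable_ofReal.aestronglyMeasurable) (M := K) ?_
    rw [ae_restrict_iff' measurableSet_Ioc]
    refine ae_of_all _ fun x hx => ?_
    rw [norm_div, RCLike.norm_ofReal, div_le_iff₀ (abs_pos.mpr hx.1.ne')]
    exact hK x
  · simpa using hg.integrableOn.div_pow_of_le_abs measurableSet_Ioi one_pos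
      (fun x hx => (lt_abs.mpr (Or.inl hx)).le) 1

theorem integral_Ioi_div_sq_eq {f f' : ℝ → 𝕜} {ε : ℝ} (hε : 0 < ε)
    (hf : ∀ x ∈ Ici ε, HasDerivAt f (f' x) x) (hfi : IntegrableOn f (Ioi ε))
    (hf'i : IntegrableOn f' (Ioi ε)) :
    ∫ x in Ioi ε, f x / (x : 𝕜) ^ 2 = (∫ x in Ioi ε, f' x / x) + f ε / ε := by
  have hdiv : ∀ x ∈ Ici ε,
      HasDerivAt (fun y : ℝ => f y / y) (f' x / x - f x / (x : 𝕜) ^ 2) x := by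
    intro x hx
    have hx₀ : (x : 𝕜) ≠ 0 := RCLike.ofReal_ne_zero.mpr (hε.trans_le hx).ne'
    have hid : HasDerivAt (fun y : ℝ => (y : 𝕜)) 1 x := by
      simpa using (RCLike.ofRealCLM (K := 𝕜)).hasDerivAt (x := x)
    convert (hf x hx).div hid hx₀ using 1
    · rfl
    · field_simp
  have hle : ∀ x ∈ Ioi ε, ε ≤ |x| := fun x hx => (lt_abs.mpr (Or.inl hx)).le
  have hf'div := hf'i.div_pow_of_le_abs measurableSet_Ioi hε hle 1
  have hfdiv := hfi.div_pow_of_le_abs measurableSet_Ioi hε hle 2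
  simp only [pow_one] at hf'div
  have hlim : Tendsto (fun y : ℝ => f y / y) atTop (𝓝 0) := by
    simpa [RCLike.real_smul_eq_coe_mul, div_eq_inv_mul] using tendsto_inv_atTop_zero.smul
      (tendsto_zero_of_hasDerivAt_of_integrableOn_Ioi
        (fun x hx => hf x (Ioi_subset_Ici_self hx)) hf'i hfi)
  have := integral_Ioi_of_hasDerivAt_of_tendsto
    (hdiv ε self_mem_Ici).continuousAt.continuousWithinAt
    (fun x hx => hdiv x (Ioi_subset_Ici_self hx)) (hf'div.sub hfdiv) hlim
  rw [integral_sub hf'div hfdiv] at this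
  linear_combination -this

theorem setIntegral_lt_abs_eq_setIntegral_Ioi {E : Type*} [NormedAddCommGroup E]
    [NormedSpace ℝ E] {f : ℝ → E} {ε : ℝ} (hε : 0 ≤ ε) (hf : IntegrableOn f {x | ε < |x|}) :
    ∫ x in {x | ε < |x|}, f x = ∫ x in Ioi ε, (f x + f (-x)) := by
  have hsplit : {x : ℝ | ε < |x|} = Iio (-ε) ∪ Ioi ε := by
    ext x; simp only [mem_ofPred_eq, lt_abs, mem_union, mem_Iio, mem_Ioi, lt_neg]; tauto
  rw [hsplit] at hf ⊢
  have hneg : IntegrableOn (fun x => f (-x)) (Ioi ε) := by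
    simpa using (hf.mono_set subset_union_left).comp_neg
  have hdisj : Disjoint (Iio (-ε)) (Ioi ε) :=
    (Iic_disjoint_Ioi (by linarith)).mono_left Iio_subset_Iic_self
  rw [setIntegral_union hdisj measurableSet_Ioi
      (hf.mono_set subset_union_left) (hf.mono_set subset_union_right),
    integral_add (hf.mono_set subset_union_right) hneg, integral_comp_neg_Ioi,
    integral_Iic_eq_integral_Iio, add_comm]

namespace SchwartzMap

theorem exists_lipschitzWith_s13 {F : Type*} [NormedAddCommGroup F] [NormedSpace ℝ F]
    (f : 𝓢(ℝ, F)) : ∃ K, LipschitzWith K f :=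
  ⟨⟨_, apply_nonneg _ (derivCLM ℝ F f)⟩, lipschitzWith_of_nnnorm_deriv_le f.differentiable
    fun x => by
      rw [← derivCLM_apply ℝ]
      exact norm_le_seminorm ℝ _ x⟩

variable {𝕜 : Type*} [RCLike 𝕜] (f : 𝓢(ℝ, 𝕜))

theorem integrableOn_Ioi_sub_comp_neg_div :
    IntegrableOn (fun x => (f x - f (-x)) / x) (Ioi 0) := by
  obtain ⟨K, hK⟩ := f.exists_lipschitzWith_s13
  refine integrableOn_Ioi_div_of_norm_le_mul_abs (f.integrable.sub f.integrable.comp_neg)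
    (K := 2 * K) fun x => ?_
  calc ‖f x - f (-x)‖ ≤ K * ‖x - -x‖ := hK.norm_sub_le x (-x)
    _ = 2 * K * |x| := by
      rw [sub_neg_eq_add, ← two_mul, norm_mul, Real.norm_two, Real.norm_eq_abs]
      ring

theorem hasDerivAt_add_comp_neg (x : ℝ) :
    HasDerivAt (fun y => f y + f (-y)) (derivCLM ℝ 𝕜 f x - derivCLM ℝ 𝕜 f (-x)) x := by
  rw [derivCLM_apply, derivCLM_apply, sub_eq_add_neg, ← neg_one_smul ℝ (deriv f (-x))]
  exact (f.hasDerivAt x).add ((f.hasDerivAt (-x)).scomp x (hasDerivAt_neg x))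

theorem setIntegral_lt_abs_div_eq {ε : ℝ} (hε : 0 < ε) :
    ∫ x in {x | ε < |x|}, f x / (x : 𝕜) = ∫ x in Ioi ε, (f x - f (-x)) / x := by
  have hf := f.integrable.integrableOn.div_pow_of_le_abs (measurableSet_lt measurable_const
    measurable_abs) hε (fun _ hx => hx.le) 1
  simp only [pow_one] at hf
  rw [setIntegral_lt_abs_eq_setIntegral_Ioi hε.le hf]
  congr 1 with x
  push_cast
  ring

theorem setIntegral_lt_abs_div_sq_eq {ε : ℝ} (hε : 0 < ε) :
    ∫ x in {x | ε < |x|}, f x / (x : 𝕜) ^ 2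
      = (∫ x in Ioi ε, (derivCLM ℝ 𝕜 f x - derivCLM ℝ 𝕜 f (-x)) / x) + (f ε + f (-ε)) / ε := by
  have hf := f.integrable.integrableOn.div_pow_of_le_abs (measurableSet_lt measurable_const
    measurable_abs) hε (fun _ hx => hx.le) 2
  rw [setIntegral_lt_abs_eq_setIntegral_Ioi hε.le hf, ← integral_Ioi_div_sq_eq hε
    (fun x _ => f.hasDerivAt_add_comp_neg x) (f.integrable.add f.integrable.comp_neg).integrableOn
    ((derivCLM ℝ 𝕜 f).integrable.sub (derivCLM ℝ 𝕜 f).integrable.comp_neg).integrableOn]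
  congr 1 with x
  push_cast
  ring

end SchwartzMap

/-- Distributional derivative of `Vp(1/x)` equals minus `Pf(1/x²)`: for every Schwartz `φ`,
the finite-part limit `lim_{ε→0⁺} (∫_{|x|>ε} φ(x)/x² dx − 2φ(0)/ε)` exists and equals
`lim_{ε→0⁺} ∫_{|x|>ε} φ′(x)/x dx`. -/
theorem deriv_pv_eq_neg_pf (φ : SchwartzMap ℝ ℂ) :
    ∃ L : ℂ,
      Tendsto
        (fun ε : ℝ => (∫ x in {x : ℝ | ε < |x|}, φ x / (x : ℂ) ^ 2) - 2 * φ 0 / (ε : ℂ))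
        (nhdsWithin 0 (Set.Ioi 0)) (nhds L) ∧
      Tendsto
        (fun ε : ℝ => ∫ x in {x : ℝ | ε < |x|}, deriv (fun y : ℝ => φ y) x / (x : ℂ))
        (nhdsWithin 0 (Set.Ioi 0)) (nhds L) := by
  set ψ := SchwartzMap.derivCLM ℝ ℂ φ
  have hpv : Tendsto (fun ε => ∫ x in Ioi ε, (ψ x - ψ (-x)) / x) (𝓝[>] 0)
      (𝓝 (∫ x in Ioi 0, (ψ x - ψ (-x)) / x)) :=
    ψ.integrableOn_Ioi_sub_comp_neg_div.continuousWithinAt_Ici_primitive_Ioi.mono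
      Ioi_subset_Ici_self
  have heven : HasDerivAt (fun x => φ x + φ (-x)) 0 0 := by
    simpa using φ.hasDerivAt_add_comp_neg 0
  have hslope : Tendsto (fun ε : ℝ => (φ ε + φ (-ε) - 2 * φ 0) / ε) (𝓝[>] 0) (𝓝 0) := by
    simpa [RCLike.real_smul_eq_coe_mul, div_eq_inv_mul, two_mul] using
      heven.tendsto_slope_zero_right
  have hpf := hpv.add hslope
  rw [add_zero] at hpf
  refine ⟨_, hpf.congr' ?_, hpv.congr' ?_⟩
  · filter_upwards [self_mem_nhdsWithin] with ε hε
    have h := φ.setIntegral_lt_abs_div_sq_eq hε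
    simp only [RCLike.ofReal_eq_complex_ofReal] at h
    rw [h]
    ring
  · filter_upwards [self_mem_nhdsWithin] with ε hε
    simpa [ψ, SchwartzMap.derivCLM_apply] using (ψ.setIntegral_lt_abs_div_eq hε).symm
end DivisionByPowers
end

section
/- Principal-value Fourier integral of a simple non-real pole: Let z ∈ ℂ with Im z ≠ 0 and let k ∈ ℝ with k ≠ 0. Then the symmetric limit lim_{R→∞} ∫_{−R}^{R} e^{−ikx}/(x − z) dx exists and equals 2πi·e^{−ikz} if Im z > 0 and k < 0, equals −2πi·e^{−ikz} if Im z < 0 and k > 0, and equals 0 otherwise. -/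
/-!
Close the segment `[-R, R]` by a rectangle of height `-R / k`. It lies in the half-plane where
`|e^{-ikw}| = e^{k Im w}` decays, so its three other edges contribute `o(1)` as `R → ∞`.
For `Im z > 0` and `k > 0` the rectangle lies below the real axis, where the integrand is
holomorphic, and Cauchy–Goursat gives `0`. For `k < 0` it lies above and eventually encloses `z`;
the Cauchy integral formula for rectangles (obtained from Goursat applied to `dslope`, and an
explicit logarithm computation of the boundary integral of `(w - z)⁻¹`) gives `2πi e^{-ikz}`.
The substitution `x ↦ -x` replaces `(z, k)` by `(-z, -k)` and negates the integral, which
reduces `Im z < 0` to `Im z > 0`.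
-/

open MeasureTheory Filter Real Complex Set
open scoped Topology Interval

lemma Complex.log_neg_of_im_pos {v : ℂ} (h : 0 < v.im) : log (-v) = log v - π * I := by
  simp only [log, norm_neg, arg_neg_eq_arg_sub_pi_of_im_pos h, ofReal_sub]
  ring

lemma Complex.log_neg_of_im_neg {v : ℂ} (h : v.im < 0) : log (-v) = log v + π * I := by
  simp only [log, norm_neg, arg_neg_eq_arg_add_pi_of_im_neg h, ofReal_add]
  ring

section Rectangle

variable {E : Type*} [NormedAddCommGroup E] {z w : ℂ}

/-- Oriented as in `Complex.integral_boundary_rect_eq_zero_of_differentiableOn`: counterclockwise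
when `z` is the lower left and `w` the upper right corner. -/
noncomputable def rectBoundaryIntegral [NormedSpace ℂ E] (f : ℂ → E) (z w : ℂ) : E :=
  (∫ x : ℝ in z.re..w.re, f (x + z.im * I)) - (∫ x : ℝ in z.re..w.re, f (x + w.im * I)) +
    I • (∫ y : ℝ in z.im..w.im, f (w.re + y * I)) - I • ∫ y : ℝ in z.im..w.im, f (z.re + y * I)

def rectBoundary (z w : ℂ) : Set ℂ :=
  [[z.re, w.re]] ×ℂ {z.im, w.im} ∪ {z.re, w.re} ×ℂ [[z.im, w.im]]

lemma mapsTo_horizontal_rectBoundary {y : ℝ} (hy : y = z.im ∨ y = w.im) :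
    MapsTo (fun x : ℝ => (x : ℂ) + y * I) [[z.re, w.re]] (rectBoundary z w) := fun x hx => by
  left
  simpa [mem_reProdIm] using ⟨hx, hy⟩

lemma mapsTo_vertical_rectBoundary {x : ℝ} (hx : x = z.re ∨ x = w.re) :
    MapsTo (fun y : ℝ => (x : ℂ) + y * I) [[z.im, w.im]] (rectBoundary z w) := fun y hy => by
  right
  simpa [mem_reProdIm] using ⟨hx, hy⟩

lemma rectBoundary_subset : rectBoundary z w ⊆ [[z.re, w.re]] ×ℂ [[z.im, w.im]] := by
  simp only [rectBoundary, union_subset_iff, reProdIm_subset_iff]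
  constructor <;> gcongr <;> simp [insert_subset_iff]

lemma notMem_rectBoundary {z₀ : ℂ} (hre : z₀.re ∈ Ioo z.re w.re) (him : z₀.im ∈ Ioo z.im w.im) :
    z₀ ∉ rectBoundary z w := by
  have ⟨hre₁, hre₂⟩ := hre
  have ⟨him₁, him₂⟩ := him
  simp only [rectBoundary, mem_union, mem_reProdIm, mem_insert_iff, mem_singleton_iff]
  rintro (⟨-, h | h⟩ | ⟨h | h, -⟩) <;> linarith

lemma continuousOn_sub_inv_rectBoundary {z₀ : ℂ} (hre : z₀.re ∈ Ioo z.re w.re)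
    (him : z₀.im ∈ Ioo z.im w.im) : ContinuousOn (fun u => (u - z₀)⁻¹) (rectBoundary z w) :=
  (continuousOn_id.sub continuousOn_const).inv₀ fun _ hu =>
    sub_ne_zero.2 (ne_of_mem_of_not_mem hu (notMem_rectBoundary hre him))

lemma intervalIntegrable_horizontal_of_continuousOn {f : ℂ → E}
    (hf : ContinuousOn f (rectBoundary z w)) {y : ℝ} (hy : y = z.im ∨ y = w.im) :
    IntervalIntegrable (fun x : ℝ => f (x + y * I)) volume z.re w.re :=
  (hf.comp (by fun_prop : Continuous fun x : ℝ => (x : ℂ) + y * I).continuousOn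
    (mapsTo_horizontal_rectBoundary hy)).intervalIntegrable

lemma intervalIntegrable_vertical_of_continuousOn {f : ℂ → E}
    (hf : ContinuousOn f (rectBoundary z w)) {x : ℝ} (hx : x = z.re ∨ x = w.re) :
    IntervalIntegrable (fun y : ℝ => f (x + y * I)) volume z.im w.im :=
  (hf.comp (by fun_prop : Continuous fun y : ℝ => (x : ℂ) + y * I).continuousOn
    (mapsTo_vertical_rectBoundary hx)).intervalIntegrable

variable [NormedSpace ℂ E]

lemma rectBoundaryIntegral_congr {f g : ℂ → E} (h : EqOn f g (rectBoundary z w)) :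
    rectBoundaryIntegral f z w = rectBoundaryIntegral g z w := by
  have horizontal {y : ℝ} (hy : y = z.im ∨ y = w.im) :=
    intervalIntegral.integral_congr (μ := volume) fun x hx =>
      h (mapsTo_horizontal_rectBoundary hy hx)
  have vertical {x : ℝ} (hx : x = z.re ∨ x = w.re) :=
    intervalIntegral.integral_congr (μ := volume) fun y hy =>
      h (mapsTo_vertical_rectBoundary hx hy)
  simp only [rectBoundaryIntegral, horizontal (.inl rfl), horizontal (.inr rfl),
    vertical (.inl rfl), vertical (.inr rfl)]

lemma rectBoundaryIntegral_add {f g : ℂ → E} (hf : ContinuousOn f (rectBoundary z w))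
    (hg : ContinuousOn g (rectBoundary z w)) :
    rectBoundaryIntegral (fun u => f u + g u) z w =
      rectBoundaryIntegral f z w + rectBoundaryIntegral g z w := by
  have horizontal := @intervalIntegrable_horizontal_of_continuousOn
  have vertical := @intervalIntegrable_vertical_of_continuousOn
  simp only [rectBoundaryIntegral]
  rw [intervalIntegral.integral_add (horizontal hf (.inl rfl)) (horizontal hg (.inl rfl)),
    intervalIntegral.integral_add (horizontal hf (.inr rfl)) (horizontal hg (.inr rfl)),
    intervalIntegral.integral_add (vertical hf (.inl rfl)) (vertical hg (.inl rfl)),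
    intervalIntegral.integral_add (vertical hf (.inr rfl)) (vertical hg (.inr rfl))]
  simp only [smul_add]
  abel

lemma rectBoundaryIntegral_sub_integral (f : ℂ → E) (R T : ℝ) :
    rectBoundaryIntegral f (-R) (R + T * I) - ∫ x in -R..R, f x =
      I • (∫ y in (0 : ℝ)..T, f (R + y * I)) - I • (∫ y in (0 : ℝ)..T, f (-R + y * I)) -
        ∫ x in -R..R, f (x + T * I) := by
  simp only [rectBoundaryIntegral, neg_re, neg_im, add_re, add_im, ofReal_re, ofReal_im,
    mul_re, mul_im, I_re, I_im, ofReal_neg]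
  simp only [mul_zero, mul_one, sub_zero, add_zero, zero_add, neg_zero, ofReal_zero, zero_mul]
  abel

variable [CompleteSpace E]

lemma rectBoundaryIntegral_smul_const (f : ℂ → ℂ) (c : E) :
    rectBoundaryIntegral (fun u => f u • c) z w = rectBoundaryIntegral f z w • c := by
  simp only [rectBoundaryIntegral, intervalIntegral.integral_smul_const, sub_smul, add_smul,
    smul_assoc]

lemma integral_horizontal_eq_sub {F f : ℂ → E} {a b y : ℝ}
    (hF : ∀ x ∈ [[a, b]], HasDerivAt F (f (x + y * I)) (x + y * I))
    (hf : IntervalIntegrable (fun x : ℝ => f (x + y * I)) volume a b) :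
    ∫ x in a..b, f (x + y * I) = F (b + y * I) - F (a + y * I) := by
  refine intervalIntegral.integral_eq_sub_of_hasDerivAt (f := fun x : ℝ => F (x + y * I))
    (fun x hx => ?_) hf
  have hline : HasDerivAt (fun t : ℝ => (t : ℂ) + y * I) 1 x := by
    simpa using ((hasDerivAt_id x).ofReal_comp).add_const (y * I : ℂ)
  simpa [Function.comp_def] using (hF x hx).scomp x hline

lemma integral_vertical_eq_sub {F f : ℂ → E} {x c d : ℝ}
    (hF : ∀ y ∈ [[c, d]], HasDerivAt F (f (x + y * I)) (x + y * I))
    (hf : IntervalIntegrable (fun y : ℝ => f (x + y * I)) volume c d) :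
    I • ∫ y in c..d, f (x + y * I) = F (x + d * I) - F (x + c * I) := by
  rw [← intervalIntegral.integral_smul]
  refine intervalIntegral.integral_eq_sub_of_hasDerivAt (f := fun y : ℝ => F (x + y * I))
    (fun y hy => ?_) (hf.smul I)
  have hline : HasDerivAt (fun t : ℝ => (x : ℂ) + t * I) I y := by
    simpa using (((hasDerivAt_id y).ofReal_comp).mul_const I).const_add (x : ℂ)
  exact (hF y hy).scomp y hline

/-- On each edge `u ↦ log (u - z₀)` is a primitive, except on the left one, where
`u ↦ log (z₀ - u)` is; the two differ by `∓πi` at the two left corners. -/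
lemma rectBoundaryIntegral_sub_inv {z₀ : ℂ} (hre : z₀.re ∈ Ioo z.re w.re)
    (him : z₀.im ∈ Ioo z.im w.im) :
    rectBoundaryIntegral (fun u => (u - z₀)⁻¹) z w = 2 * π * I := by
  have ⟨hre₁, hre₂⟩ := hre
  have ⟨him₁, him₂⟩ := him
  have hcont := continuousOn_sub_inv_rectBoundary hre him
  have hlog {u : ℂ} (h : 0 < (u - z₀).re ∨ (u - z₀).im ≠ 0) :
      HasDerivAt (fun u => log (u - z₀)) (u - z₀)⁻¹ u := by
    simpa using ((hasDerivAt_id u).sub_const z₀).clog (mem_slitPlane_iff.2 h)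
  have hlog' {u : ℂ} (h : 0 < (z₀ - u).re) :
      HasDerivAt (fun u => log (z₀ - u)) (u - z₀)⁻¹ u := by
    have := ((hasDerivAt_id u).const_sub z₀).clog (mem_slitPlane_iff.2 (.inl h))
    rwa [id, neg_div, ← div_neg, neg_sub, one_div] at this
  have bottom := integral_horizontal_eq_sub (f := fun u => (u - z₀)⁻¹)
    (fun x _ => hlog (.inr (by simpa [sub_eq_zero] using him₁.ne)))
    (intervalIntegrable_horizontal_of_continuousOn hcont (.inl rfl))
  have top := integral_horizontal_eq_sub (f := fun u => (u - z₀)⁻¹)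
    (fun x _ => hlog (.inr (by simpa [sub_eq_zero] using him₂.ne')))
    (intervalIntegrable_horizontal_of_continuousOn hcont (.inr rfl))
  have right := integral_vertical_eq_sub (f := fun u => (u - z₀)⁻¹)
    (fun y _ => hlog (.inl (by simpa using hre₂)))
    (intervalIntegrable_vertical_of_continuousOn hcont (.inr rfl))
  have left := integral_vertical_eq_sub (f := fun u => (u - z₀)⁻¹)
    (fun y _ => hlog' (by simpa using hre₁))
    (intervalIntegrable_vertical_of_continuousOn hcont (.inl rfl))
  have upper_left : log (z.re + w.im * I - z₀) = log (z₀ - (z.re + w.im * I)) + π * I := by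
    rw [← neg_sub, log_neg_of_im_neg (by simpa using him₂)]
  have lower_left : log (z.re + z.im * I - z₀) = log (z₀ - (z.re + z.im * I)) - π * I := by
    rw [← neg_sub, log_neg_of_im_pos (by simpa using him₁)]
  simp only [rectBoundaryIntegral, smul_eq_mul] at right left ⊢
  rw [bottom, top, right, left]
  linear_combination upper_left - lower_left

theorem rectBoundaryIntegral_sub_inv_smul {f : ℂ → E} {z₀ : ℂ}
    (hf : DifferentiableOn ℂ f ([[z.re, w.re]] ×ℂ [[z.im, w.im]]))
    (hre : z₀.re ∈ Ioo z.re w.re) (him : z₀.im ∈ Ioo z.im w.im) :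
    rectBoundaryIntegral (fun u => (u - z₀)⁻¹ • f u) z w = (2 * π * I) • f z₀ := by
  have hnhds : [[z.re, w.re]] ×ℂ [[z.im, w.im]] ∈ 𝓝 z₀ := by
    refine mem_of_superset ((isOpen_Ioo.reProdIm isOpen_Ioo).mem_nhds ⟨hre, him⟩) ?_
    rw [reProdIm_subset_iff]
    exact prod_mono (Ioo_subset_Icc_self.trans Icc_subset_uIcc)
      (Ioo_subset_Icc_self.trans Icc_subset_uIcc)
  have hg := (differentiableOn_dslope hnhds).2 hf
  have hsplit : EqOn (fun u => (u - z₀)⁻¹ • f u) (fun u => dslope f z₀ u + (u - z₀)⁻¹ • f z₀)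
      (rectBoundary z w) := fun u hu => by
    have hu : u - z₀ ≠ 0 := sub_ne_zero.2 (ne_of_mem_of_not_mem hu (notMem_rectBoundary hre him))
    rw [← sub_eq_iff_eq_add, ← smul_sub, ← sub_smul_dslope, inv_smul_smul₀ hu]
  rw [rectBoundaryIntegral_congr hsplit,
    rectBoundaryIntegral_add (g := fun u => (u - z₀)⁻¹ • f z₀)
      (hg.continuousOn.mono rectBoundary_subset)
      ((continuousOn_sub_inv_rectBoundary hre him).smul continuousOn_const),
    rectBoundaryIntegral_smul_const, rectBoundaryIntegral_sub_inv hre him,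
    show rectBoundaryIntegral (dslope f z₀) z w = 0 from
      integral_boundary_rect_eq_zero_of_differentiableOn _ z w hg, zero_add]

end Rectangle

lemma tendsto_abs_mul_add_atTop {a : ℝ} (ha : a ≠ 0) (b : ℝ) :
    Tendsto (fun R : ℝ => |a * R + b|) atTop atTop := by
  refine tendsto_atTop_mono' _ ?_ (tendsto_atTop_add_const_right _ (-|b|)
    (tendsto_id.const_mul_atTop (abs_pos.2 ha)))
  filter_upwards [eventually_ge_atTop 0] with R hR
  have := abs_sub_abs_le_abs_sub (a * R) (-b)
  rw [abs_mul, abs_of_nonneg hR, abs_neg, sub_neg_eq_add] at this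
  simpa [← sub_eq_add_neg] using this

noncomputable def poleKernel (k : ℝ) (z w : ℂ) : ℂ := cexp (-I * k * w) / (w - z)

lemma norm_cexp_neg_I_mul (k : ℝ) (w : ℂ) : ‖cexp (-I * k * w)‖ = Real.exp (k * w.im) := by
  rw [norm_exp]
  congr 1
  simp

section PoleKernel

variable {k : ℝ} {z : ℂ}

lemma norm_poleKernel (w : ℂ) : ‖poleKernel k z w‖ = Real.exp (k * w.im) / ‖w - z‖ := by
  rw [poleKernel, norm_div, norm_cexp_neg_I_mul]

lemma differentiableAt_poleKernel {w : ℂ} (hw : w ≠ z) :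
    DifferentiableAt ℂ (poleKernel k z) w :=
  (by fun_prop : Differentiable ℂ fun w => cexp (-I * k * w)).differentiableAt.div
    (differentiableAt_id.sub_const z) (sub_ne_zero.2 hw)

lemma integral_poleKernel_neg_neg (R : ℝ) :
    ∫ x in -R..R, poleKernel (-k) (-z) x = -∫ x in -R..R, poleKernel k z x := by
  rw [← intervalIntegral.integral_neg, ← neg_neg R, ← intervalIntegral.integral_comp_neg,
    neg_neg]
  refine intervalIntegral.integral_congr fun x _ => ?_
  simp only [poleKernel, ofReal_neg]
  rw [show -(x : ℂ) - -z = -(x - z) by ring, div_neg]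
  ring_nf

lemma norm_integral_poleKernel_horizontal_le (a b : ℝ) {y : ℝ} (hy : y ≠ z.im) :
    ‖∫ x in a..b, poleKernel k z (x + y * I)‖ ≤ Real.exp (k * y) / |y - z.im| * |b - a| := by
  refine intervalIntegral.norm_integral_le_of_norm_le_const fun x _ => ?_
  rw [norm_poleKernel, show ((x : ℂ) + y * I).im = y by simp]
  refine div_le_div_of_nonneg_left (Real.exp_pos _).le (abs_pos.2 (sub_ne_zero.2 hy)) ?_
  simpa using abs_im_le_norm (x + y * I - z)

lemma norm_integral_poleKernel_vertical_le (hk : k ≠ 0) {c T : ℝ} (hc : c ≠ z.re)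
    (hkT : k * T ≤ 0) :
    ‖∫ y in (0 : ℝ)..T, poleKernel k z (c + y * I)‖ ≤ (|k| * |c - z.re|)⁻¹ := by
  have hd : 0 < |c - z.re| := abs_pos.2 (sub_ne_zero.2 hc)
  have hexp : ∫ y in (0 : ℝ)..T, Real.exp (k * y) = k⁻¹ * (Real.exp (k * T) - 1) := by
    simp [intervalIntegral.integral_comp_mul_left (fun y => Real.exp y) hk, integral_exp]
  calc ‖∫ y in (0 : ℝ)..T, poleKernel k z (c + y * I)‖
      ≤ |(∫ y in (0 : ℝ)..T, Real.exp (k * y) / |c - z.re|)| := by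
        refine intervalIntegral.norm_integral_le_abs_of_norm_le
          (ae_of_all _ fun y => ?_)
          ((by fun_prop : Continuous fun y => Real.exp (k * y) / |c - z.re|).intervalIntegrable _ _)
        rw [norm_poleKernel, show ((c : ℂ) + y * I).im = y by simp]
        refine div_le_div_of_nonneg_left (Real.exp_pos _).le hd ?_
        simpa using abs_re_le_norm (c + y * I - z)
    _ = |Real.exp (k * T) - 1| / (|k| * |c - z.re|) := by
        rw [intervalIntegral.integral_div, hexp, abs_div, abs_mul, abs_inv, abs_abs]
        field_simp
    _ ≤ (|k| * |c - z.re|)⁻¹ := by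
        rw [← one_div]
        gcongr
        rw [abs_sub_comm, abs_of_nonneg (sub_nonneg.2 (Real.exp_le_one_iff.2 hkT))]
        linarith [Real.exp_pos (k * T)]

lemma tendsto_integral_poleKernel_vertical (hk : k ≠ 0) {c : ℝ → ℝ}
    (hc : Tendsto (fun R => |c R - z.re|) atTop atTop) :
    Tendsto (fun R : ℝ => ∫ y in (0 : ℝ)..(-R / k), poleKernel k z (c R + y * I)) atTop (𝓝 0) := by
  refine squeeze_zero_norm' ?_ (tendsto_inv_atTop_zero.comp (hc.const_mul_atTop (abs_pos.2 hk)))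
  filter_upwards [hc.eventually_gt_atTop 0, eventually_ge_atTop 0] with R hcR hR
  refine norm_integral_poleKernel_vertical_le hk (fun h => by simp [h] at hcR) ?_
  rw [mul_div_cancel₀ _ hk]
  linarith

lemma tendsto_integral_poleKernel_horizontal (hk : k ≠ 0) :
    Tendsto (fun R : ℝ => ∫ x in -R..R, poleKernel k z (x + (-R / k : ℝ) * I)) atTop (𝓝 0) := by
  have hdist : Tendsto (fun R : ℝ => |-R / k - z.im|) atTop atTop := by
    simpa [neg_div, div_eq_inv_mul, sub_eq_add_neg] using
      tendsto_abs_mul_add_atTop (neg_ne_zero.2 (inv_ne_zero hk)) (-z.im)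
  have hbound := ((tendsto_pow_mul_exp_neg_atTop_nhds_zero 1).const_mul 2).mul
    (tendsto_inv_atTop_zero.comp hdist)
  rw [mul_zero] at hbound
  refine squeeze_zero_norm' ?_ hbound
  filter_upwards [hdist.eventually_gt_atTop 0, eventually_ge_atTop 0] with R hdR hR
  refine (norm_integral_poleKernel_horizontal_le _ _ fun h => by simp [h] at hdR).trans_eq ?_
  rw [mul_div_cancel₀ _ hk, abs_of_nonneg (by linarith : 0 ≤ R - -R)]
  simp only [Function.comp, pow_one]
  ring

lemma tendsto_rectBoundaryIntegral_poleKernel_sub_integral (hk : k ≠ 0) :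
    Tendsto (fun R : ℝ => rectBoundaryIntegral (poleKernel k z) (-R) (R + (-R / k : ℝ) * I) -
      ∫ x in -R..R, poleKernel k z x) atTop (𝓝 0) := by
  have right := tendsto_integral_poleKernel_vertical (z := z) hk (c := id)
    (by simpa [sub_eq_add_neg] using tendsto_abs_mul_add_atTop one_ne_zero (-z.re))
  have left := tendsto_integral_poleKernel_vertical (z := z) hk (c := Neg.neg)
    (by simpa [sub_eq_add_neg] using tendsto_abs_mul_add_atTop (neg_ne_zero.2 one_ne_zero) (-z.re))
  simp only [rectBoundaryIntegral_sub_integral]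
  simpa using
    ((right.const_smul I).sub (left.const_smul I)).sub
      (tendsto_integral_poleKernel_horizontal (z := z) hk)

lemma tendsto_integral_poleKernel_of_eventually_eq (hk : k ≠ 0) {c : ℂ}
    (h : ∀ᶠ R : ℝ in atTop, rectBoundaryIntegral (poleKernel k z) (-R) (R + (-R / k : ℝ) * I) = c) :
    Tendsto (fun R : ℝ => ∫ x in -R..R, poleKernel k z x) atTop (𝓝 c) := by
  have hlim := (tendsto_const_nhds (x := c)).sub
    (tendsto_rectBoundaryIntegral_poleKernel_sub_integral (z := z) hk)
  rw [sub_zero] at hlim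
  exact hlim.congr' (h.mono fun R hR => by rw [← hR, sub_sub_cancel])

lemma tendsto_integral_poleKernel_of_pos (hz : 0 < z.im) (hk : 0 < k) :
    Tendsto (fun R : ℝ => ∫ x in -R..R, poleKernel k z x) atTop (𝓝 0) := by
  refine tendsto_integral_poleKernel_of_eventually_eq hk.ne' ?_
  filter_upwards [eventually_ge_atTop 0] with R hR
  refine integral_boundary_rect_eq_zero_of_differentiableOn _ _ _ fun w hw =>
    (differentiableAt_poleKernel ?_).differentiableWithinAt
  rintro rfl
  have him : w.im ∈ [[0, -R / k]] := by simpa using hw.2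
  rw [uIcc_of_ge (div_nonpos_of_nonpos_of_nonneg (by linarith) hk.le)] at him
  linarith [him.2]

lemma tendsto_integral_poleKernel_of_neg (hz : 0 < z.im) (hk : k < 0) :
    Tendsto (fun R : ℝ => ∫ x in -R..R, poleKernel k z x) atTop
      (𝓝 (2 * π * I * cexp (-I * k * z))) := by
  refine tendsto_integral_poleKernel_of_eventually_eq hk.ne ?_
  filter_upwards [eventually_gt_atTop |z.re|, eventually_gt_atTop (-k * z.im)] with R hre him
  have hkernel : poleKernel k z = fun u => (u - z)⁻¹ • cexp (-I * k * u) := by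
    ext u
    rw [poleKernel, smul_eq_mul, div_eq_inv_mul]
  rw [hkernel]
  refine rectBoundaryIntegral_sub_inv_smul (by fun_prop : Differentiable ℂ _).differentiableOn
    ?_ ?_
  · simpa using abs_lt.1 hre
  · have : z.im < -R / k := by rw [lt_div_iff_of_neg hk]; linarith
    simpa using ⟨hz, this⟩

end PoleKernel

/-- Principal-value Fourier integral of a simple non-real pole: for `Im z ≠ 0` and `k ≠ 0`,
the symmetric limit `lim_{R→∞} ∫_{−R}^R e^{−ikx}/(x−z) dx` exists and equals
`2πi e^{−ikz}` if `Im z > 0` and `k < 0`, equals `−2πi e^{−ikz}` if `Im z < 0` and `k > 0`,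
and equals `0` otherwise. -/
theorem fourier_simple_pole (z : ℂ) (hz : z.im ≠ 0) (k : ℝ) (hk : k ≠ 0) :
    Tendsto (fun R : ℝ => ∫ x in (-R)..R, Complex.exp (-Complex.I * (k : ℂ) * (x : ℂ)) / ((x : ℂ) - z))
      atTop
      (nhds (if 0 < z.im ∧ k < 0 then 2 * (π : ℂ) * Complex.I * Complex.exp (-Complex.I * (k : ℂ) * z)
        else if z.im < 0 ∧ 0 < k then -(2 * (π : ℂ) * Complex.I) * Complex.exp (-Complex.I * (k : ℂ) * z)
        else 0)) := by
  change Tendsto (fun R : ℝ => ∫ x in -R..R, poleKernel k z x) atTop _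
  rcases hz.lt_or_gt with hz | hz <;> rcases hk.lt_or_gt with hk | hk
  · simpa [hz.not_gt, hk.not_gt, integral_poleKernel_neg_neg] using
      (tendsto_integral_poleKernel_of_pos (z := -z) (by simpa) (neg_pos.2 hk)).neg
  · simpa [hz, hk, hz.not_gt, integral_poleKernel_neg_neg] using
      (tendsto_integral_poleKernel_of_neg (z := -z) (by simpa) (neg_lt_zero.2 hk)).neg
  · simpa [hz, hk] using tendsto_integral_poleKernel_of_neg hz hk
  · simpa [hz.not_gt, hk.not_gt] using tendsto_integral_poleKernel_of_pos hz hk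
end
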